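/- arXiv:0809.0060 — 4 statements merged into one kernel-verified Lean document; each statement's English description precedes it below -/
import Mathlib

section
/- In the gadget game Check^{i,a}, player 1 has a winning strategy from configuration (s_0^{i,a}, N(u)) if and only if the i-th symbol of the configuration u equals a; i.e., a sequence of choices c_0,…,c_{n-1} with c_k ∈ {digit(b)·G^k : b ∈ A} for k ≠ i and c_i = digit(a)·G^i sums to N(u) exactly when b_i = a, where u = b_0⋯b_{n-1}. -/
theorem Fin.sum_val_mul_pow_injective {G n : ℕ} :
    Function.Injective fun d : Fin n → Fin G => ∑ k, (d k : ℕ) * G ^ (k : ℕ) :=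
  fun d e h => finFunctionFinEquiv.injective <| Fin.ext <| by
    simpa only [finFunctionFinEquiv_apply] using h

theorem sum_digit_mul_pow_injective {A : Type*} {G n : ℕ} {digit : A → Fin G}
    (hdigit : Function.Injective digit) :
    Function.Injective fun u : Fin n → A => ∑ k, (digit (u k) : ℕ) * G ^ (k : ℕ) :=
  Fin.sum_val_mul_pow_injective.comp hdigit.comp_left

theorem check_gadget_winning_iff_general {A : Type*}
    (G n : ℕ)
    (digit : A → Fin G) (hdigit : Function.Injective digit)
    (i : Fin n) (a : A) (u : Fin n → A) :
    (∃ c : Fin n → ℕ,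
        c i = (digit a : ℕ) * G ^ (i : ℕ) ∧
        (∀ k : Fin n, k ≠ i → ∃ b : A, c k = (digit b : ℕ) * G ^ (k : ℕ)) ∧
        ∑ k : Fin n, c k = ∑ k : Fin n, (digit (u k) : ℕ) * G ^ (k : ℕ))
      ↔ u i = a := by
  constructor
  · rintro ⟨c, hci, hc, hsum⟩
    have hdigits : ∀ k, ∃ b, c k = (digit b : ℕ) * G ^ (k : ℕ) ∧ (k = i → b = a) := by
      intro k
      by_cases hk : k = i
      · subst hk
        exact ⟨a, hci, fun _ => rfl⟩
      · obtain ⟨b, hb⟩ := hc k hk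
        exact ⟨b, hb, fun h => absurd h hk⟩
    choose b hb hbi using hdigits
    have hbu : b = u := sum_digit_mul_pow_injective hdigit <| by
      simpa only [hb] using hsum
    exact hbu ▸ hbi i rfl
  · rintro rfl
    exact ⟨fun k => (digit (u k) : ℕ) * G ^ (k : ℕ), rfl, fun k _ => ⟨u k, rfl⟩, rfl⟩

/-- In the gadget game `Check^{i,a}`, player 1 can count down from `N(u)` to `0`
(i.e. pick `c_k ∈ {digit(b)·G^k : b ∈ A}` for `k ≠ i` and `c_i = digit(a)·G^i` summing to
`N(u)`) if and only if the `i`-th symbol of `u` is `a`. -/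
theorem check_gadget_winning_iff {A : Type*} [Fintype A] [Nonempty A]
    (G n : ℕ) (hcard : Fintype.card A < G)
    (digit : A → Fin G) (hdigit : Function.Injective digit)
    (i : Fin n) (a : A) (u : Fin n → A) :
    (∃ c : Fin n → ℕ,
        c i = (digit a : ℕ) * G ^ (i : ℕ) ∧
        (∀ k : Fin n, k ≠ i → ∃ b : A, c k = (digit b : ℕ) * G ^ (k : ℕ)) ∧
        ∑ k : Fin n, c k = ∑ k : Fin n, (digit (u k) : ℕ) * G ^ (k : ℕ))
      ↔ u i = a :=
  check_gadget_winning_iff_general G n digit hdigit i a u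
end

section
/- For a structurally non-Zeno finite timed Markov decision process, every cycle (finite path returning to its starting state) has total duration at least 1; consequently any path of total duration at most D visits at most (D+1)·|S| states. -/
/-- A finite path of a discrete TMDP with transition relation
`trans ⊆ S × ℕ × Dist(S)`: the sequence of visited states `p` together with the
durations `d` of its transitions, each taken via some transition of the TMDP whose
distribution assigns positive probability to the successor. -/
def IsTMDPPath {S : Type*} (trans : Set (S × ℕ × PMF S)) :
    ∀ n : ℕ, (Fin (n + 1) → S) → (Fin n → ℕ) → Prop :=
  fun n p d =>
    ∀ k : Fin n, ∃ ν : PMF S, (p k.castSucc, d k, ν) ∈ trans ∧ p k.succ ∈ ν.support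

/-! Label position `i` of a path by the pair (duration elapsed before `i`, state at `i`). Two
positions with the same label would enclose a cycle of duration zero, which structural
non-Zenoness forbids; so the `n + 1` labels are distinct elements of `{0, …, D} × S`. -/

open Finset

theorem add_one_le_mul_card_of_sum_Ico_pos {α : Type*} [Fintype α] {n D : ℕ}
    (p : Fin (n + 1) → α) (d : ℕ → ℕ) (hD : ∑ k ∈ range n, d k ≤ D)
    (hrepeat : ∀ i j : Fin (n + 1), i < j → p i = p j → 0 < ∑ k ∈ Ico (i : ℕ) j, d k) :
    n + 1 ≤ (D + 1) * Fintype.card α := by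
  have hprefix (i : Fin (n + 1)) : ∑ k ∈ range i, d k < D + 1 :=
    Nat.lt_succ_of_le <| (sum_le_sum_of_subset (range_subset_range.2 i.is_le)).trans hD
  let label (i : Fin (n + 1)) : Fin (D + 1) × α := (⟨∑ k ∈ range i, d k, hprefix i⟩, p i)
  have hlabel_ne {i j : Fin (n + 1)} (hij : i < j) : label i ≠ label j := by
    intro h
    obtain ⟨hsum, hp⟩ := Prod.mk.inj h
    have hsplit := sum_range_add_sum_Ico d hij.le
    have hcycle := hrepeat i j hij hp
    simp only [Fin.mk.injEq] at hsum
    omega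
  have hinj : Function.Injective label := fun i j h =>
    le_antisymm (not_lt.1 fun hji => hlabel_ne hji h.symm) (not_lt.1 fun hij => hlabel_ne hij h)
  simpa using Fintype.card_le_of_injective label hinj

theorem IsTMDPPath.segment {S : Type*} {trans : Set (S × ℕ × PMF S)} {n : ℕ}
    {p : Fin (n + 1) → S} {d : Fin n → ℕ} (h : IsTMDPPath trans n p d) (i m : ℕ)
    (him : i + m ≤ n) :
    IsTMDPPath trans m (fun k => p ⟨i + k, by omega⟩) (fun k => d ⟨i + k, by omega⟩) :=
  fun k => h ⟨i + k, by omega⟩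

def IsStructurallyNonZeno {S : Type*} (trans : Set (S × ℕ × PMF S)) : Prop :=
  ∀ (n : ℕ) (p : Fin (n + 1) → S) (d : Fin n → ℕ), 0 < n →
    IsTMDPPath trans n p d → p 0 = p (Fin.last n) → 0 < ∑ k, d k

theorem IsTMDPPath.sum_Ico_pos_of_eq {S : Type*} {trans : Set (S × ℕ × PMF S)} {n : ℕ}
    {p : Fin (n + 1) → S} {d : Fin n → ℕ} (hNZ : IsStructurallyNonZeno trans)
    (h : IsTMDPPath trans n p d) {i j : Fin (n + 1)} (hij : i < j) (hp : p i = p j) :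
    0 < ∑ k ∈ Ico (i : ℕ) j, Function.extend Fin.val d 0 k := by
  obtain ⟨m, hm⟩ : ∃ m, (j : ℕ) = i + m := ⟨j - i, by omega⟩
  have hcycle := hNZ m _ _ (by omega) (h.segment i m (by omega)) (by
    convert hp using 2 <;> ext <;> simp [hm])
  rw [sum_Ico_eq_sum_range, hm, Nat.add_sub_cancel_left, ← Fin.sum_univ_eq_sum_range]
  refine hcycle.trans_eq (sum_congr rfl fun k _ => ?_)
  exact (Fin.val_injective.extend_apply d 0 ⟨i + k, by omega⟩).symm

/-- In a structurally non-Zeno finite TMDP (every cycle has total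
duration at least 1, as durations are natural numbers and cycles have positive
duration), any path of total duration at most `D` visits at most `(D+1)·|S|` states,
i.e. has length (number of transitions) at most `(D+1)·|S|`. -/
theorem structurally_nonZeno_path_length_bound {S : Type*} [Fintype S]
    (trans : Set (S × ℕ × PMF S))
    (hNZ : ∀ (n : ℕ) (p : Fin (n + 1) → S) (d : Fin n → ℕ), 0 < n →
      IsTMDPPath trans n p d → p 0 = p (Fin.last n) → 0 < ∑ k, d k)
    (D : ℕ) :
    ∀ (n : ℕ) (p : Fin (n + 1) → S) (d : Fin n → ℕ),
      IsTMDPPath trans n p d → ∑ k, d k ≤ D → n ≤ (D + 1) * Fintype.card S := by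
  intro n p d hpath hD
  have hD' : ∑ k ∈ range n, Function.extend Fin.val d 0 k ≤ D := by
    rw [← Fin.sum_univ_eq_sum_range]
    simpa only [Fin.val_injective.extend_apply] using hD
  have := add_one_le_mul_card_of_sum_Ico_pos p _ hD' fun i j hij hp =>
    hpath.sum_Ico_pos_of_eq hNZ hij hp
  omega
end

section
/- In the two-player game on a structurally non-Zeno discrete TMDP where player P_n chooses transitions and player P_p chooses successors in the support, if α^i(s) < ∞ then α^i(s) equals the minimal total duration that player P_p can guarantee for reaching a Φ₂-state along a Φ₁-path from s within at most i rounds; if α^i(s) = ∞ then P_p cannot guarantee reaching Φ₂ along a Φ₁-path within i rounds. -/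
open scoped Classical

/-- The value iteration `α^i` on the discrete TMDP. -/
noncomputable def alphaIter {S : Type*} (trans : Set (S × ℕ × PMF S))
    (Φ₁ Φ₂ : S → Prop) : ℕ → S → ℕ∞
  | 0, s => if Φ₂ s then 0 else ⊤
  | i + 1, s =>
    if Φ₂ s then 0
    else if ¬ Φ₁ s then ⊤
    else ⨆ (d : ℕ) (ν : PMF S) (_ : (s, d, ν) ∈ trans),
      ((d : ℕ∞) + ⨅ s' ∈ ν.support, alphaIter trans Φ₁ Φ₂ i s')

/-- `PEnsure trans Φ₁ Φ₂ i s D`: in the turn-based game where player `P_n` chooses a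
transition `(s,d,ν) ∈ trans` from the current state and player `P_p` chooses a successor
in the support of `ν` (the round having duration `d`), player `P_p` can guarantee, within
at most `i` rounds and against any strategy of `P_n`, reaching a `Φ₂`-state along a path
whose intermediate states satisfy `Φ₁`, with total duration at most `D`.
(Player `P_p`'s choice of successor is represented by the choice function `choice`.) -/
inductive PEnsure {S : Type*} (trans : Set (S × ℕ × PMF S)) (Φ₁ Φ₂ : S → Prop) :
    ℕ → S → ℕ → Prop
  | done (i : ℕ) (s : S) (D : ℕ) : Φ₂ s → PEnsure trans Φ₁ Φ₂ i s D
  | step (i : ℕ) (s : S) (D : ℕ)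
      (choice : ∀ (d : ℕ) (ν : PMF S), (s, d, ν) ∈ trans → S) : Φ₁ s →
      (∀ (d : ℕ) (ν : PMF S) (h : (s, d, ν) ∈ trans),
        choice d ν h ∈ ν.support ∧ d ≤ D) →
      (∀ (d : ℕ) (ν : PMF S) (h : (s, d, ν) ∈ trans),
        PEnsure trans Φ₁ Φ₂ i (choice d ν h) (D - d)) →
      PEnsure trans Φ₁ Φ₂ (i + 1) s D

/-!
The value iteration and the game satisfy the same one-round recursion: `α^(i+1)(s) ≤ D` holds
iff `s` is a `Φ₂`-state, or `s` is a `Φ₁`-state and every transition `(s, d, ν)` has `d ≤ D` and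
some successor `s' ∈ supp ν` with `α^i(s') ≤ D - d`; and `P_p` can guarantee duration `D` in
`i + 1` rounds iff the same holds with `P_p` guaranteeing `D - d` from `s'` in `i` rounds.
By induction, `P_p` can guarantee `D` in `i` rounds exactly when `α^i(s) ≤ D`.
-/

theorem ENat.exists_mem_le_of_biInf_le {ι : Type*} {t : Set ι} {f : ι → ℕ∞} {n : ℕ}
    (h : ⨅ x ∈ t, f x ≤ n) : ∃ x ∈ t, f x ≤ n := by
  have hlt : ⨅ x ∈ t, f x < n + 1 := h.trans_lt (ENat.natCast_lt_natCast.2 n.lt_succ_self)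
  obtain ⟨x, hx⟩ := iInf_lt_iff.1 hlt
  obtain ⟨hxt, hfx⟩ := iInf_lt_iff.1 hx
  exact ⟨x, hxt, (ENat.lt_add_one_iff (ENat.natCast_ne_top n)).1 hfx⟩

theorem ENat.natCast_add_le_natCast_iff {d D : ℕ} {x : ℕ∞} :
    (d : ℕ∞) + x ≤ D ↔ d ≤ D ∧ x ≤ (D - d : ℕ) := by
  induction x using ENat.recTopCoe with
  | top => simp
  | coe m => norm_cast; omega

section Game

variable {S : Type*} {trans : Set (S × ℕ × PMF S)} {Φ₁ Φ₂ : S → Prop}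

theorem alphaIter_zero_le_iff {s : S} {D : ℕ} :
    alphaIter trans Φ₁ Φ₂ 0 s ≤ D ↔ Φ₂ s := by
  by_cases hΦ₂ : Φ₂ s <;> simp [alphaIter, hΦ₂]

theorem alphaIter_succ_le_iff {i : ℕ} {s : S} {D : ℕ} :
    alphaIter trans Φ₁ Φ₂ (i + 1) s ≤ D ↔
      Φ₂ s ∨ Φ₁ s ∧ ∀ d ν, (s, d, ν) ∈ trans →
        d ≤ D ∧ ∃ s' ∈ ν.support, alphaIter trans Φ₁ Φ₂ i s' ≤ (D - d : ℕ) := by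
  by_cases hΦ₂ : Φ₂ s
  · simp [alphaIter, hΦ₂]
  by_cases hΦ₁ : Φ₁ s
  · simp only [alphaIter, hΦ₂, hΦ₁, if_false, not_true_eq_false, iSup_le_iff,
      ENat.natCast_add_le_natCast_iff, false_or, true_and]
    refine forall₃_congr fun d ν _ => and_congr_right fun _ => ?_
    exact ⟨ENat.exists_mem_le_of_biInf_le, fun ⟨s', hs', hle⟩ => (biInf_le _ hs').trans hle⟩
  · simp [alphaIter, hΦ₂, hΦ₁]

theorem pEnsure_zero_iff {s : S} {D : ℕ} : PEnsure trans Φ₁ Φ₂ 0 s D ↔ Φ₂ s :=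
  ⟨fun | .done _ _ _ h => h, .done 0 s D⟩

theorem pEnsure_succ_iff {i : ℕ} {s : S} {D : ℕ} :
    PEnsure trans Φ₁ Φ₂ (i + 1) s D ↔
      Φ₂ s ∨ Φ₁ s ∧ ∀ d ν, (s, d, ν) ∈ trans →
        d ≤ D ∧ ∃ s' ∈ ν.support, PEnsure trans Φ₁ Φ₂ i s' (D - d) := by
  constructor
  · rintro (⟨_, _, _, hΦ₂⟩ | ⟨_, _, _, choice, hΦ₁, hchoice, hnext⟩)
    · exact .inl hΦ₂
    · exact .inr ⟨hΦ₁, fun d ν h =>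
        ⟨(hchoice d ν h).2, choice d ν h, (hchoice d ν h).1, hnext d ν h⟩⟩
  · rintro (hΦ₂ | ⟨hΦ₁, hmove⟩)
    · exact .done _ s D hΦ₂
    · choose hd choice hsupp hnext using hmove
      exact .step i s D choice hΦ₁ (fun d ν h => ⟨hsupp d ν h, hd d ν h⟩) hnext

theorem pEnsure_iff_alphaIter_le {i : ℕ} {s : S} {D : ℕ} :
    PEnsure trans Φ₁ Φ₂ i s D ↔ alphaIter trans Φ₁ Φ₂ i s ≤ D := by
  induction i generalizing s D with
  | zero => rw [pEnsure_zero_iff, alphaIter_zero_le_iff]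
  | succ i ih => simp only [pEnsure_succ_iff, alphaIter_succ_le_iff, ih]

end Game

theorem alphaIter_is_game_value_general {S : Type*}
    (trans : Set (S × ℕ × PMF S)) (Φ₁ Φ₂ : S → Prop) :
    ∀ (i : ℕ) (s : S),
      (alphaIter trans Φ₁ Φ₂ i s ≠ ⊤ →
        ∃ D : ℕ, alphaIter trans Φ₁ Φ₂ i s = (D : ℕ∞) ∧
          PEnsure trans Φ₁ Φ₂ i s D ∧
          ∀ D' : ℕ, PEnsure trans Φ₁ Φ₂ i s D' → D ≤ D') ∧
      (alphaIter trans Φ₁ Φ₂ i s = ⊤ →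
        ∀ D : ℕ, ¬ PEnsure trans Φ₁ Φ₂ i s D) := by
  intro i s
  constructor
  · intro hfin
    obtain ⟨D, hD⟩ := ENat.ne_top_iff_exists.1 hfin
    refine ⟨D, hD.symm, pEnsure_iff_alphaIter_le.2 hD.ge, fun D' hD' => ?_⟩
    exact_mod_cast hD ▸ pEnsure_iff_alphaIter_le.1 hD'
  · intro htop D hD
    simpa [htop] using pEnsure_iff_alphaIter_le.1 hD

/-- If `α^i(s) < ∞` then `α^i(s)` is exactly the minimal total duration that
player `P_p` can guarantee for reaching a `Φ₂`-state along a `Φ₁`-path from `s` within at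
most `i` rounds; if `α^i(s) = ∞` then `P_p` cannot guarantee reaching `Φ₂` along a
`Φ₁`-path within `i` rounds (for any duration bound). -/
theorem alphaIter_is_game_value {S : Type*} [Fintype S]
    (trans : Set (S × ℕ × PMF S)) (Φ₁ Φ₂ : S → Prop) :
    ∀ (i : ℕ) (s : S),
      (alphaIter trans Φ₁ Φ₂ i s ≠ ⊤ →
        ∃ D : ℕ, alphaIter trans Φ₁ Φ₂ i s = (D : ℕ∞) ∧
          PEnsure trans Φ₁ Φ₂ i s D ∧
          ∀ D' : ℕ, PEnsure trans Φ₁ Φ₂ i s D' → D ≤ D') ∧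
      (alphaIter trans Φ₁ Φ₂ i s = ⊤ →
        ∀ D : ℕ, ¬ PEnsure trans Φ₁ Φ₂ i s D) :=
  alphaIter_is_game_value_general trans Φ₁ Φ₂
end

section
/- In the reduction from countdown games to TMDPs: player 1 wins the countdown game C from configuration (s̄, c) if and only if in the associated TMDP there exists an adversary under which, with probability 1, a state is reached from s̄ at total elapsed duration exactly c. -/
/-!
Since every continuation probability is at most `1`, an average of them under `ν s d` equals `1`
iff each successor in the support of `ν s d` — that is, each `s'` with `(s, d, s') ∈ T` — has
probability `1`. Hence "probability one" unfolds to exactly the recursion defining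
`CountdownWin1`, with the universal choice of player 2 becoming the probabilistic branching.
For the forward direction the adversary plays a winning move for the remaining budget,
which it reads off the history as `c` minus the elapsed duration.
-/

open scoped Classical

/-- Player 1 wins the countdown game from configuration `(s, c)`. -/
inductive CountdownWin1 {S : Type*} (T : Set (S × ℕ × S)) : S → ℕ → Prop
  | zero (s : S) : CountdownWin1 T s 0
  | step (s : S) (c d : ℕ) : 0 < c → 0 < d → d ≤ c → (∃ s', (s, d, s') ∈ T) →
      (∀ s'', (s, d, s'') ∈ T → CountdownWin1 T s'' (c - d)) →
      CountdownWin1 T s c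

/-- In the TMDP `T_C` associated with the countdown game `(S, T)` (with distributions
`ν s d` for each available duration), `hitProb T ν A c h s` is the probability, under
the adversary `A` (which picks a duration given the history `h` of state–duration pairs
and the current state `s`), that the accumulated elapsed duration is exactly `c` at some
state along the path; `c` is the remaining budget.  A choice of a duration that is zero,
exceeds the budget, or has no transition contributes probability `0`. -/
noncomputable def hitProb {S : Type*} (T : Set (S × ℕ × S)) (ν : S → ℕ → PMF S)
    (A : List (S × ℕ) → S → ℕ) : ℕ → List (S × ℕ) → S → ENNReal
  | 0, _, _ => 1
  | c + 1, h, s =>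
      if hd : 0 < A h s ∧ A h s ≤ c + 1 ∧ ∃ s', (s, A h s, s') ∈ T then
        ∑' s', (ν s (A h s)) s' *
          hitProb T ν A (c + 1 - A h s) (h ++ [(s, A h s)]) s'
      else 0
  termination_by c _ _ => c
  decreasing_by omega

open scoped ENNReal

theorem PMF.tsum_mul_eq_one_iff {α : Type*} (p : PMF α) {f : α → ℝ≥0∞} (hf : ∀ a, f a ≤ 1) :
    ∑' a, p a * f a = 1 ↔ ∀ a ∈ p.support, f a = 1 := by
  constructor
  · intro hsum a ha
    by_contra hne
    have hlt : ∑' b, p b * f b < ∑' b, p b :=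
      ENNReal.tsum_lt_tsum (by simp [hsum]) (fun b => mul_le_of_le_one_right' (hf b))
        (by simpa using ENNReal.mul_lt_mul_right ha (p.apply_ne_top a) ((hf a).lt_of_ne hne))
    rw [hsum, p.tsum_coe] at hlt
    exact hlt.false
  · intro hone
    calc ∑' a, p a * f a = ∑' a, p a := tsum_congr fun a => by
          by_cases ha : p a = 0
          · simp [ha]
          · rw [hone a ha, mul_one]
      _ = 1 := p.tsum_coe

section CountdownGame

variable {S : Type*} (T : Set (S × ℕ × S))

def IsWinningMove (s : S) (n d : ℕ) : Prop :=
  0 < d ∧ d ≤ n ∧ (∃ s', (s, d, s') ∈ T) ∧ ∀ s', (s, d, s') ∈ T → CountdownWin1 T s' (n - d)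

theorem countdownWin1_succ_iff {s : S} {n : ℕ} :
    CountdownWin1 T s (n + 1) ↔ ∃ d, IsWinningMove T s (n + 1) d := by
  constructor
  · rintro (_ | ⟨_, _, d, -, hd, hdn, hex, hall⟩)
    exact ⟨d, hd, hdn, hex, hall⟩
  · rintro ⟨d, hd, hdn, hex, hall⟩
    exact .step s (n + 1) d n.succ_pos hd hdn hex hall

def elapsed (h : List (S × ℕ)) : ℕ := (h.map Prod.snd).sum

theorem elapsed_append_singleton (h : List (S × ℕ)) (s : S) (d : ℕ) :
    elapsed (h ++ [(s, d)]) = elapsed h + d := by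
  simp [elapsed]

noncomputable def countdownAdversary (c : ℕ) (h : List (S × ℕ)) (s : S) : ℕ :=
  Classical.epsilon (IsWinningMove T s (c - elapsed h))

end CountdownGame

section HitProb

variable {S : Type*} (T : Set (S × ℕ × S)) (ν : S → ℕ → PMF S)

theorem hitProb_le_one (A : List (S × ℕ) → S → ℕ) :
    ∀ n h s, hitProb T ν A n h s ≤ 1
  | 0, h, s => by rw [hitProb]
  | n + 1, h, s => by
    rw [hitProb]
    split_ifs
    · calc ∑' s', ν s (A h s) s' * hitProb T ν A (n + 1 - A h s) (h ++ [(s, A h s)]) s'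
          ≤ ∑' s', ν s (A h s) s' :=
            ENNReal.tsum_le_tsum fun s' => mul_le_of_le_one_right' (hitProb_le_one A _ _ _)
        _ = 1 := (ν s (A h s)).tsum_coe
    · exact zero_le_one
  termination_by n => n
  decreasing_by omega

variable (hν : ∀ (s : S) (d : ℕ), (∃ s', (s, d, s') ∈ T) →
  (ν s d).support = {s' | (s, d, s') ∈ T})
include hν

theorem hitProb_succ_eq_one_iff (A : List (S × ℕ) → S → ℕ) (n : ℕ) (h : List (S × ℕ)) (s : S) :
    hitProb T ν A (n + 1) h s = 1 ↔
      0 < A h s ∧ A h s ≤ n + 1 ∧ (∃ s', (s, A h s, s') ∈ T) ∧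
        ∀ s', (s, A h s, s') ∈ T →
          hitProb T ν A (n + 1 - A h s) (h ++ [(s, A h s)]) s' = 1 := by
  rw [hitProb]
  split_ifs with hd
  · obtain ⟨hpos, hle, hex⟩ := hd
    rw [PMF.tsum_mul_eq_one_iff _ fun _ => hitProb_le_one T ν A _ _ _, hν s _ hex]
    simp only [hpos, hle, hex, true_and, Set.mem_ofPred_eq]
  · simp only [zero_ne_one, false_iff]
    tauto

theorem countdownWin1_of_hitProb_eq_one (A : List (S × ℕ) → S → ℕ) :
    ∀ n h s, hitProb T ν A n h s = 1 → CountdownWin1 T s n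
  | 0, _, s, _ => .zero s
  | n + 1, h, s, hone => by
    obtain ⟨hpos, hle, hex, hall⟩ := (hitProb_succ_eq_one_iff T ν hν A n h s).1 hone
    exact (countdownWin1_succ_iff T).2 ⟨A h s, hpos, hle, hex, fun s' hs' =>
      countdownWin1_of_hitProb_eq_one A _ _ _ (hall s' hs')⟩
  termination_by n => n
  decreasing_by omega

theorem hitProb_countdownAdversary_eq_one (c : ℕ) :
    ∀ n h s, elapsed h + n = c → CountdownWin1 T s n →
      hitProb T ν (countdownAdversary T c) n h s = 1
  | 0, h, s, _, _ => by rw [hitProb]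
  | n + 1, h, s, hc, hwin => by
    have hmove : IsWinningMove T s (n + 1) (countdownAdversary T c h s) := by
      rw [countdownAdversary, show c - elapsed h = n + 1 by omega]
      exact Classical.epsilon_spec ((countdownWin1_succ_iff T).1 hwin)
    obtain ⟨hpos, hle, hex, hall⟩ := hmove
    refine (hitProb_succ_eq_one_iff T ν hν _ n h s).2 ⟨hpos, hle, hex, fun s' hs' => ?_⟩
    refine hitProb_countdownAdversary_eq_one c _ _ _ ?_ (hall s' hs')
    rw [elapsed_append_singleton]
    omega
  termination_by n => n
  decreasing_by omega

end HitProb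

theorem countdown_iff_TMDP_prob_one_exact_duration_general {S : Type*}
    (T : Set (S × ℕ × S))
    (ν : S → ℕ → PMF S)
    (hν : ∀ (s : S) (d : ℕ), (∃ s', (s, d, s') ∈ T) →
      (ν s d).support = {s' | (s, d, s') ∈ T})
    (sbar : S) (c : ℕ) :
    CountdownWin1 T sbar c ↔
      ∃ A : List (S × ℕ) → S → ℕ, hitProb T ν A c [] sbar = 1 := by
  constructor
  · intro hwin
    exact ⟨countdownAdversary T c,
      hitProb_countdownAdversary_eq_one T ν hν c c [] sbar (by simp [elapsed]) hwin⟩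
  · rintro ⟨A, hA⟩
    exact countdownWin1_of_hitProb_eq_one T ν hν A c [] sbar hA

/-- player 1 wins the countdown game `C = (S, T)` from configuration
`(s̄, c)` iff in the associated TMDP — same states; for each state `s` and available
duration `d` one transition `(s, d, ν s d)` where `ν s d` has support
`{s' : (s,d,s') ∈ T}` — there exists an adversary under which, with probability 1, a
state is reached from `s̄` at total elapsed duration exactly `c`. -/
theorem countdown_iff_TMDP_prob_one_exact_duration {S : Type*}
    (T : Set (S × ℕ × S)) (hpos : ∀ t ∈ T, 0 < t.2.1)
    (ν : S → ℕ → PMF S)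
    (hν : ∀ (s : S) (d : ℕ), (∃ s', (s, d, s') ∈ T) →
      (ν s d).support = {s' | (s, d, s') ∈ T})
    (sbar : S) (c : ℕ) :
    CountdownWin1 T sbar c ↔
      ∃ A : List (S × ℕ) → S → ℕ, hitProb T ν A c [] sbar = 1 :=
  countdown_iff_TMDP_prob_one_exact_duration_general T ν hν sbar c
end
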